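/- arXiv:1611.07474 — 2 statements merged into one kernel-verified Lean document; each statement's English description precedes it below -/
import Mathlib

section
/- For every matroid M, the constant term of the Kazhdan-Lusztig polynomial P_M(t) equals 1. -/
open Polynomial Finset

/-- A "pre-matroid": a finite ground set together with a rank function.
It is a matroid when `IsMatroid` holds. -/
structure PreMatroid (α : Type*) where
  E : Finset α
  r : Finset α → ℕ

namespace PreMatroid

variable {α : Type*} [DecidableEq α]

/-- The rank axioms for a rank function on the ground set `E`, extended to all finite
sets by `r A = r (A ∩ E)`. -/
def IsMatroid (M : PreMatroid α) : Prop :=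
  M.r ∅ = 0 ∧ (∀ A, M.r A ≤ A.card) ∧ (∀ A B, A ⊆ B → M.r A ≤ M.r B) ∧
    (∀ A B, M.r (A ∪ B) + M.r (A ∩ B) ≤ M.r A + M.r B) ∧ (∀ A, M.r (A ∩ M.E) = M.r A)

/-- The rank of a matroid. -/
def rk (M : PreMatroid α) : ℕ := M.r M.E

/-- The flats of a matroid: subsets of the ground set such that adding any new element of the
ground set increases the rank. -/
def flats (M : PreMatroid α) : Finset (Finset α) :=
  M.E.powerset.filter fun F => ∀ e ∈ M.E, e ∉ F → M.r F < M.r (insert e F)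

theorem subset_of_mem_flats {M : PreMatroid α} {F : Finset α} (hF : F ∈ M.flats) : F ⊆ M.E :=
  mem_powerset.mp (mem_filter.mp hF).1

/-- The Möbius function `μ(∅̂, F)` of the lattice of flats, where `∅̂` is the minimal flat:
`μ = 1` on the minimal flat, and on any other flat `F` it is minus the sum of the values of `μ`
on all flats strictly contained in `F`. -/
def mu (M : PreMatroid α) (F : Finset α) : ℤ :=
  if (M.flats.filter fun G => G ⊂ F).Nonempty then
    -∑ G ∈ (M.flats.filter fun G => G ⊂ F).attach, M.mu G.1
  else 1
termination_by F.card
decreasing_by exact Finset.card_lt_card (Finset.mem_filter.mp G.2).2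

/-- The characteristic polynomial `χ_M(t) = ∑_{F ∈ L(M)} μ(∅̂,F) t^{rk M - rk F}`. -/
noncomputable def charPoly (M : PreMatroid α) : Polynomial ℤ :=
  ∑ F ∈ M.flats, Polynomial.C (M.mu F) * Polynomial.X ^ (M.rk - M.r F)

/-- The localization `M_F`: the restriction of `M` to the flat `F`. -/
def loc (M : PreMatroid α) (F : Finset α) : PreMatroid α :=
  ⟨F, fun A => M.r (A ∩ F)⟩

/-- The contraction (restriction) `M^F` of `M` at the flat `F`, with ground set `E ∖ F` and
rank function `A ↦ r (A ∪ F) - r F`. -/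
def con (M : PreMatroid α) (F : Finset α) : PreMatroid α :=
  ⟨M.E \ F, fun A => M.r ((A ∩ (M.E \ F)) ∪ F) - M.r F⟩

theorem IsMatroid.con {M : PreMatroid α} (h : M.IsMatroid) {F : Finset α} (hF : F ⊆ M.E) :
    (M.con F).IsMatroid := by
  obtain ⟨h0, hle, hmono, hsub, hcomp⟩ := h
  refine ⟨?_, ?_, ?_, ?_, ?_⟩
  · show M.r ((∅ ∩ (M.E \ F)) ∪ F) - M.r F = 0
    simp
  · intro A
    show M.r ((A ∩ (M.E \ F)) ∪ F) - M.r F ≤ A.card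
    have h1 := hsub (A ∩ (M.E \ F)) F
    have h2 := hle (A ∩ (M.E \ F))
    have h3 : (A ∩ (M.E \ F)).card ≤ A.card := card_le_card inter_subset_left
    omega
  · intro A B hAB
    show M.r ((A ∩ (M.E \ F)) ∪ F) - M.r F ≤ M.r ((B ∩ (M.E \ F)) ∪ F) - M.r F
    have : (A ∩ (M.E \ F)) ∪ F ⊆ (B ∩ (M.E \ F)) ∪ F :=
      union_subset_union (inter_subset_inter hAB (Finset.Subset.refl _)) (Finset.Subset.refl _)
    exact Nat.sub_le_sub_right (hmono _ _ this) _
  · intro A B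
    set D := M.E \ F with hD
    show M.r (((A ∪ B) ∩ D) ∪ F) - M.r F + (M.r (((A ∩ B) ∩ D) ∪ F) - M.r F) ≤
      M.r ((A ∩ D) ∪ F) - M.r F + (M.r ((B ∩ D) ∪ F) - M.r F)
    have e1 : (A ∪ B) ∩ D ∪ F = ((A ∩ D) ∪ F) ∪ ((B ∩ D) ∪ F) := by
      ext x; simp; tauto
    have e2 : (A ∩ B) ∩ D ∪ F = ((A ∩ D) ∪ F) ∩ ((B ∩ D) ∪ F) := by
      ext x; simp; tauto
    have key := hsub ((A ∩ D) ∪ F) ((B ∩ D) ∪ F)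
    have m1 := hmono F ((A ∩ D) ∪ F) subset_union_right
    have m2 := hmono F ((B ∩ D) ∪ F) subset_union_right
    have m3 := hmono F ((A ∪ B) ∩ D ∪ F) subset_union_right
    have m4 := hmono F ((A ∩ B) ∩ D ∪ F) subset_union_right
    rw [← e1, ← e2] at key
    omega
  · intro A
    show M.r ((A ∩ (M.E \ F) ∩ (M.E \ F)) ∪ F) - M.r F = M.r ((A ∩ (M.E \ F)) ∪ F) - M.r F
    rw [inter_assoc, inter_self]

end PreMatroid


namespace PreMatroid
variable {α : Type*} [DecidableEq α]

/-- The minimal flat: the closure of the empty set. -/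
def zeroFlat (M : PreMatroid α) : Finset α := M.E.filter fun e => M.r {e} = 0

lemma r_eq_zero (M : PreMatroid α) (h : M.IsMatroid) (A : Finset α)
    (hA : ∀ e ∈ A, M.r {e} = 0) : M.r A = 0 := by
  obtain ⟨h0, hle, hmono, hsub, hcomp⟩ := h
  induction A using Finset.induction_on with
  | empty => exact h0
  | @insert a s ha ih =>
    have hs := ih fun e he => hA e (mem_insert_of_mem he)
    have ha0 := hA a (mem_insert_self a s)
    have := hsub {a} s
    have : M.r ({a} ∪ s) = 0 := by omega
    rwa [show ({a} : Finset α) ∪ s = insert a s by ext x; simp] at this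

lemma zeroFlat_mem (M : PreMatroid α) (h : M.IsMatroid) : M.zeroFlat ∈ M.flats := by
  obtain ⟨h0, hle, hmono, hsub, hcomp⟩ := h
  refine mem_filter.mpr ⟨mem_powerset.mpr (filter_subset _ _), ?_⟩
  intro e he hne
  have hz : M.r M.zeroFlat = 0 :=
    M.r_eq_zero ⟨h0, hle, hmono, hsub, hcomp⟩ _ fun x hx => (mem_filter.mp hx).2
  have h1 : M.r {e} ≠ 0 := by
    intro hcon
    exact hne (mem_filter.mpr ⟨he, hcon⟩)
  have h2 : M.r {e} ≤ M.r (insert e M.zeroFlat) :=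
    hmono _ _ (by simp)
  omega

lemma zeroFlat_r (M : PreMatroid α) (h : M.IsMatroid) : M.r M.zeroFlat = 0 :=
  M.r_eq_zero h _ fun x hx => (mem_filter.mp hx).2

lemma flat_rank_zero_eq (M : PreMatroid α) (h : M.IsMatroid) {G : Finset α}
    (hG : G ∈ M.flats) (hG0 : M.r G = 0) : G = M.zeroFlat := by
  obtain ⟨h0, hle, hmono, hsub, hcomp⟩ := h
  obtain ⟨hGE, hGf⟩ := mem_filter.mp hG
  rw [mem_powerset] at hGE
  ext e
  simp only [zeroFlat, mem_filter]
  constructor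
  · intro heG
    refine ⟨hGE heG, ?_⟩
    have := hmono {e} G (by simpa using heG)
    omega
  · rintro ⟨heE, he0⟩
    by_contra heG
    have := hGf e heE heG
    have hsb := hsub {e} G
    have : M.r ({e} ∪ G) = 0 := by omega
    rw [show ({e} : Finset α) ∪ G = insert e G by ext x; simp] at this
    omega

lemma mu_zeroFlat (M : PreMatroid α) (h : M.IsMatroid) : M.mu M.zeroFlat = 1 := by
  rw [mu]
  rw [if_neg]
  rw [Finset.not_nonempty_iff_eq_empty, Finset.filter_eq_empty_iff]
  intro G hG hGsub
  have hle : M.r G ≤ M.r M.zeroFlat := h.2.2.1 _ _ hGsub.subset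
  have := M.zeroFlat_r h
  have hG0 : M.r G = 0 := by omega
  exact hGsub.ne (M.flat_rank_zero_eq h hG hG0)

lemma r_le_rk (M : PreMatroid α) (h : M.IsMatroid) {A : Finset α} (hA : A ⊆ M.E) :
    M.r A ≤ M.rk := h.2.2.1 _ _ hA

/-- The coefficient of `t^{rk M}` in the characteristic polynomial is `1`. -/
lemma charPoly_coeff_rk (M : PreMatroid α) (h : M.IsMatroid) :
    M.charPoly.coeff M.rk = 1 := by
  rw [charPoly, finset_sum_coeff]
  rw [Finset.sum_eq_single M.zeroFlat]
  · rw [M.mu_zeroFlat h, M.zeroFlat_r h]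
    simp
  · intro F hF hne
    have hFE := subset_of_mem_flats hF
    have h1 : M.r F ≤ M.rk := M.r_le_rk h hFE
    have h2 : M.r F ≠ 0 := fun h0 => hne (M.flat_rank_zero_eq h hF h0)
    rw [coeff_C_mul, coeff_X_pow, if_neg (by omega)]
    ring
  · intro hnot
    exact absurd (M.zeroFlat_mem h) hnot

lemma loc_E_isMatroid (M : PreMatroid α) (h : M.IsMatroid) : (M.loc M.E).IsMatroid := by
  obtain ⟨h0, hle, hmono, hsub, hcomp⟩ := h
  refine ⟨?_, ?_, ?_, ?_, ?_⟩
  · show M.r (∅ ∩ M.E) = 0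
    simpa using h0
  · intro A
    show M.r (A ∩ M.E) ≤ A.card
    exact le_trans (hle _) (card_le_card inter_subset_left)
  · intro A B hAB
    exact hmono _ _ (inter_subset_inter hAB (Finset.Subset.refl _))
  · intro A B
    show M.r ((A ∪ B) ∩ M.E) + M.r ((A ∩ B) ∩ M.E) ≤ _
    rw [union_inter_distrib_right, show (A ∩ B) ∩ M.E = (A ∩ M.E) ∩ (B ∩ M.E) by
      ext x; simp]
    exact hsub _ _
  · intro A
    show M.r (A ∩ M.E ∩ M.E) = M.r (A ∩ M.E)
    rw [inter_assoc, inter_self]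

lemma E_mem_flats (M : PreMatroid α) : M.E ∈ M.flats := by
  refine mem_filter.mpr ⟨mem_powerset.mpr (Finset.Subset.refl _), ?_⟩
  intro e he hne
  exact absurd he hne

end PreMatroid

namespace PreMatroid
variable {α : Type*} [DecidableEq α]

lemma charPoly_natDegree_le (M : PreMatroid α) : M.charPoly.natDegree ≤ M.rk := by
  apply Polynomial.natDegree_sum_le_of_forall_le
  intro F _
  exact le_trans (Polynomial.natDegree_C_mul_le _ _)
    (by simp [Polynomial.natDegree_X_pow, Nat.sub_le])

end PreMatroid

/-- The type of assignments, to each matroid (on any ground type), of a polynomial. -/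
def KLfun : Type 1 := ∀ (α : Type) [DecidableEq α] (M : PreMatroid α), M.IsMatroid → Polynomial ℤ

/-- The defining conditions of the Kazhdan-Lusztig polynomial of a matroid:
`P_M = 1` in rank zero, `deg P_M < (rk M)/2` in positive rank, and the defining recursion
`t^{rk M} P_M(1/t) = ∑_{F ∈ L(M)} χ_{M_F}(t) P_{M^F}(t)`. -/
def KLconds (P : KLfun) : Prop :=
  ∀ (α : Type) [DecidableEq α] (M : PreMatroid α) (h : M.IsMatroid),
    (M.rk = 0 → P α M h = 1) ∧
    (0 < M.rk → 2 * (P α M h).natDegree < M.rk) ∧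
    ((P α M h).reflect M.rk =
      ∑ F ∈ M.flats.attach, (M.loc F.1).charPoly *
        P α (M.con F.1) (h.con (PreMatroid.subset_of_mem_flats F.2)))

/-- For every matroid `M`, the constant term of the Kazhdan-Lusztig
polynomial `P_M(t)` equals `1`. -/
theorem kl_constant_term (P : KLfun) (hP : KLconds P)
    (α : Type) [DecidableEq α] (M : PreMatroid α) (h : M.IsMatroid) :
    (P α M h).coeff 0 = 1 := by
  obtain ⟨hrk0, hdeg, hrec⟩ := hP α M h
  by_cases hz : M.rk = 0
  · rw [hrk0 hz]; simp
  have key := congrArg (fun p => p.coeff M.rk) hrec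
  simp only [Polynomial.coeff_reflect, Polynomial.revAt_le (le_refl M.rk),
    Nat.sub_self] at key
  rw [Polynomial.finset_sum_coeff] at key
  rw [Finset.sum_eq_single (⟨M.E, M.E_mem_flats⟩ : {x // x ∈ M.flats})] at key
  · have hconE : (M.con M.E).rk = 0 := by
      show M.r ((M.E \ M.E ∩ (M.E \ M.E)) ∪ M.E) - M.r M.E = 0
      simp
    rw [(hP α (M.con M.E) _).1 hconE, mul_one] at key
    rw [key]
    have hloc : (M.loc M.E).rk = M.rk := by
      show M.r (M.E ∩ M.E) = M.r M.E
      rw [Finset.inter_self]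
    rw [← hloc]
    exact (M.loc M.E).charPoly_coeff_rk (M.loc_E_isMatroid h)
  · rintro ⟨F, hF⟩ _ hne
    have hFE := PreMatroid.subset_of_mem_flats hF
    have hFne : F ≠ M.E := fun hEq => hne (by simp [hEq])
    obtain ⟨e, heE, heF⟩ : ∃ e ∈ M.E, e ∉ F := by
      by_contra hc
      push_neg at hc
      exact hFne (Finset.Subset.antisymm hFE hc)
    have hlt : M.r F < M.rk := by
      have h1 := (Finset.mem_filter.mp hF).2 e heE heF
      have h2 : M.r (insert e F) ≤ M.rk :=
        h.2.2.1 _ _ (Finset.insert_subset heE hFE)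
      omega
    have hcon : (M.con F).rk = M.rk - M.r F := by
      show M.r ((M.E \ F ∩ (M.E \ F)) ∪ F) - M.r F = _
      rw [Finset.inter_self, Finset.sdiff_union_self_eq_union,
        Finset.union_eq_left.mpr hFE]
      rfl
    have hpos : 0 < (M.con F).rk := by omega
    have hdegP := (hP α (M.con F) (h.con hFE)).2.1 hpos
    have hdegC : (M.loc F).charPoly.natDegree ≤ M.r F := by
      have := (M.loc F).charPoly_natDegree_le
      have hloc : (M.loc F).rk = M.r F := by
        show M.r (F ∩ F) = M.r F
        rw [Finset.inter_self]
      omega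
    apply Polynomial.coeff_eq_zero_of_natDegree_lt
    calc ((M.loc F).charPoly * P α (M.con F) (h.con hFE)).natDegree
        ≤ (M.loc F).charPoly.natDegree + (P α (M.con F) (h.con hFE)).natDegree :=
          Polynomial.natDegree_mul_le
      _ < M.rk := by omega
  · intro hn
    exact absurd (Finset.mem_attach _ _) hn
end

section
/- If a matroid M is the direct sum of two matroids M_1 and M_2, then P_M(t) = P_{M_1}(t) · P_{M_2}(t). -/
open Polynomial Finset

/-- The direct sum of two pre-matroids on disjoint ground sets. -/
def PreMatroid.dsum {α : Type*} [DecidableEq α] (M₁ M₂ : PreMatroid α) : PreMatroid α :=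
  ⟨M₁.E ∪ M₂.E, fun A => M₁.r (A ∩ M₁.E) + M₂.r (A ∩ M₂.E)⟩


/-!
Flats of `M₁ ⊕ M₂` are exactly the unions `F₁ ∪ F₂` of flats of the summands, with additive
rank; hence the Möbius function and the characteristic polynomial are multiplicative, and the
localization and contraction at `F₁ ∪ F₂` are the direct sums of those at `F₁` and `F₂`.
Multiplying the defining recursions of `P_{M₁}` and `P_{M₂}` and comparing with that of `P_M`,
induction on `rk + |E|` matches all terms except the one at the bottom pair `(∅, ∅)`. So
`D = P_M - P_{M₁} P_{M₂}` satisfies `t^{rk M} D(1/t) ∈ {D, 0}`, and `2 deg D < rk M` forces `D = 0`.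
-/

namespace Polynomial

theorem eq_zero_of_reflect_eq_self {R : Type*} [Semiring R] {f : R[X]} {N : ℕ}
    (h : f.reflect N = f) (hdeg : 2 * f.natDegree < N) : f = 0 := by
  by_contra hf
  have hc := congrArg (coeff · (N - f.natDegree)) h
  simp only [coeff_reflect, revAt_le (Nat.sub_le N f.natDegree),
    Nat.sub_sub_self (by omega : f.natDegree ≤ N)] at hc
  rw [coeff_eq_zero_of_natDegree_lt (show f.natDegree < N - f.natDegree by omega)] at hc
  exact hf (leadingCoeff_eq_zero.mp hc)

end Polynomial

namespace Finset

theorem filter_subset_eq_insert_filter_ssubset {α : Type*} [DecidableEq α] {S : Finset (Finset α)}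
    {F : Finset α} (hF : F ∈ S) : S.filter (· ⊆ F) = insert F (S.filter (· ⊂ F)) := by
  ext G
  simp only [mem_filter, mem_insert]
  constructor
  · rintro ⟨hG, hGF⟩
    exact (eq_or_ne G F).imp_right fun hne => ⟨hG, ssubset_iff_subset_ne.mpr ⟨hGF, hne⟩⟩
  · rintro (rfl | ⟨hG, hGF⟩)
    exacts [⟨hF, Subset.refl G⟩, ⟨hG, hGF.subset⟩]

end Finset

namespace PreMatroid

variable {α : Type*} [DecidableEq α] {M M₁ M₂ : PreMatroid α} {F F₁ F₂ : Finset α}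

theorem mem_flats_iff :
    F ∈ M.flats ↔ F ⊆ M.E ∧ ∀ e ∈ M.E, e ∉ F → M.r F < M.r (insert e F) := by
  rw [flats, mem_filter, mem_powerset]

theorem IsMatroid.monotone (h : M.IsMatroid) : Monotone M.r := h.2.2.1

theorem monotone_loc_r (hm : Monotone M.r) (F : Finset α) : Monotone (M.loc F).r :=
  fun _ _ hAB => hm (inter_subset_inter_right hAB)

theorem rk_con (hF : F ⊆ M.E) : (M.con F).rk = M.rk - M.r F := by
  change M.r ((M.E \ F) ∩ (M.E \ F) ∪ F) - M.r F = M.r M.E - M.r F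
  rw [inter_self, sdiff_union_of_subset hF]

theorem rk_add_card_con_lt (hm : Monotone M.r) (hF : F ⊆ M.E) (hne : F.Nonempty) :
    (M.con F).rk + (M.con F).E.card < M.rk + M.E.card := by
  have hr : M.r F ≤ M.rk := hm hF
  have hcard : F.card ≤ M.E.card := card_le_card hF
  have hpos : 0 < F.card := hne.card_pos
  rw [rk_con hF, show (M.con F).E = M.E \ F from rfl, card_sdiff_of_subset hF]
  omega

theorem con_empty (h : M.IsMatroid) : M.con ∅ = M := by
  obtain ⟨E, r⟩ := M
  obtain ⟨h0, -, -, -, hE⟩ := h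
  dsimp only at h0 hE
  simp only [con, sdiff_empty, union_empty, mk.injEq, true_and]
  funext A
  rw [hE A, h0, Nat.sub_zero]

theorem charPoly_loc_empty (M : PreMatroid α) : (M.loc ∅).charPoly = 1 := by
  have hflats : (M.loc ∅).flats = {∅} := by
    simp [flats, loc]
  have hmu : (M.loc ∅).mu ∅ = 1 := by
    rw [mu, if_neg]
    simp
  rw [charPoly, hflats, sum_singleton, hmu]
  simp [rk, loc]

-- The indicator says that `F` is the least flat; as a count it is multiplicative under `dsum`.
theorem sum_mu_filter_subset (hF : F ∈ M.flats) :
    ∑ G ∈ M.flats.filter (· ⊆ F), M.mu G = if #(M.flats.filter (· ⊆ F)) = 1 then 1 else 0 := by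
  have hF' : F ∉ M.flats.filter (· ⊂ F) := fun h => (mem_filter.mp h).2.ne rfl
  rw [filter_subset_eq_insert_filter_ssubset hF, sum_insert hF', card_insert_of_notMem hF', mu]
  by_cases hne : (M.flats.filter (· ⊂ F)).Nonempty
  · rw [if_pos hne, sum_attach, if_neg (by have := hne.card_pos; omega)]
    ring
  · rw [not_nonempty_iff_eq_empty.mp hne]
    simp

theorem dsum_comm (M₁ M₂ : PreMatroid α) : M₁.dsum M₂ = M₂.dsum M₁ := by
  simp only [dsum, union_comm M₁.E, add_comm (M₁.r _)]

theorem dsum_E : (M₁.dsum M₂).E = M₁.E ∪ M₂.E := rfl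

theorem dsum_r (A : Finset α) : (M₁.dsum M₂).r A = M₁.r (A ∩ M₁.E) + M₂.r (A ∩ M₂.E) := rfl

theorem rk_dsum : (M₁.dsum M₂).rk = M₁.rk + M₂.rk := by
  rw [rk, dsum_r, dsum_E, union_inter_cancel_left, union_inter_cancel_right, rk, rk]

theorem union_inter_left_eq (hd : Disjoint M₁.E M₂.E) (h₁ : F₁ ⊆ M₁.E) (h₂ : F₂ ⊆ M₂.E) :
    (F₁ ∪ F₂) ∩ M₁.E = F₁ := by
  rw [union_inter_distrib_right, inter_eq_left.mpr h₁,
    disjoint_iff_inter_eq_empty.mp (disjoint_of_subset_left h₂ hd.symm), union_empty]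

theorem union_inter_right_eq (hd : Disjoint M₁.E M₂.E) (h₁ : F₁ ⊆ M₁.E) (h₂ : F₂ ⊆ M₂.E) :
    (F₁ ∪ F₂) ∩ M₂.E = F₂ := by
  rw [union_comm F₁ F₂]
  exact union_inter_left_eq hd.symm h₂ h₁

theorem r_dsum_union (hd : Disjoint M₁.E M₂.E) (h₁ : F₁ ⊆ M₁.E) (h₂ : F₂ ⊆ M₂.E) :
    (M₁.dsum M₂).r (F₁ ∪ F₂) = M₁.r F₁ + M₂.r F₂ := by
  rw [dsum_r, union_inter_left_eq hd h₁ h₂, union_inter_right_eq hd h₁ h₂]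

theorem forall_lt_r_insert_dsum_iff (hd : Disjoint M₁.E M₂.E) (F : Finset α) :
    (∀ e ∈ M₁.E, e ∉ F → (M₁.dsum M₂).r F < (M₁.dsum M₂).r (insert e F)) ↔
      F ∩ M₁.E ∈ M₁.flats := by
  simp only [mem_flats_iff, inter_subset_right, true_and]
  refine forall₂_congr fun e he => ?_
  simp only [dsum, insert_inter_of_mem he, insert_inter_of_notMem (disjoint_left.mp hd he),
    mem_inter, he, and_true, add_lt_add_iff_right]

theorem mem_flats_dsum_iff (hd : Disjoint M₁.E M₂.E) :
    F ∈ (M₁.dsum M₂).flats ↔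
      F ⊆ M₁.E ∪ M₂.E ∧ F ∩ M₁.E ∈ M₁.flats ∧ F ∩ M₂.E ∈ M₂.flats := by
  have h₂ := forall_lt_r_insert_dsum_iff hd.symm F
  rw [dsum_comm] at h₂
  rw [mem_flats_iff, dsum_E, forall_mem_union, forall_lt_r_insert_dsum_iff hd, h₂]

theorem eq_inter_union_inter (hF : F ⊆ M₁.E ∪ M₂.E) : F = F ∩ M₁.E ∪ F ∩ M₂.E := by
  rw [← inter_union_distrib_left, inter_eq_left.mpr hF]

theorem union_mem_flats_dsum (hd : Disjoint M₁.E M₂.E) (h₁ : F₁ ∈ M₁.flats)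
    (h₂ : F₂ ∈ M₂.flats) : F₁ ∪ F₂ ∈ (M₁.dsum M₂).flats := by
  have hs₁ := subset_of_mem_flats h₁
  have hs₂ := subset_of_mem_flats h₂
  rw [mem_flats_dsum_iff hd, union_inter_left_eq hd hs₁ hs₂, union_inter_right_eq hd hs₁ hs₂]
  exact ⟨union_subset_union hs₁ hs₂, h₁, h₂⟩

theorem sum_flats_dsum {β : Type*} [AddCommMonoid β] (hd : Disjoint M₁.E M₂.E)
    (f : Finset α → β) :
    ∑ F ∈ (M₁.dsum M₂).flats, f F = ∑ F₁ ∈ M₁.flats, ∑ F₂ ∈ M₂.flats, f (F₁ ∪ F₂) := by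
  rw [← sum_product']
  refine sum_nbij' (fun F => (F ∩ M₁.E, F ∩ M₂.E)) (fun p => p.1 ∪ p.2) ?_ ?_ ?_ ?_ ?_
  · intro F hF
    exact mem_product.mpr ((mem_flats_dsum_iff hd).mp hF).2
  · intro p hp
    exact union_mem_flats_dsum hd (mem_product.mp hp).1 (mem_product.mp hp).2
  · intro F hF
    exact (eq_inter_union_inter ((mem_flats_dsum_iff hd).mp hF).1).symm
  · intro p hp
    have hs₁ := subset_of_mem_flats (mem_product.mp hp).1
    have hs₂ := subset_of_mem_flats (mem_product.mp hp).2
    exact Prod.ext (union_inter_left_eq hd hs₁ hs₂) (union_inter_right_eq hd hs₁ hs₂)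
  · intro F hF
    exact congrArg f (eq_inter_union_inter ((mem_flats_dsum_iff hd).mp hF).1)

theorem sum_flats_subset_dsum {β : Type*} [AddCommMonoid β] (hd : Disjoint M₁.E M₂.E)
    (F : Finset α) (f : Finset α → β) :
    ∑ G ∈ (M₁.dsum M₂).flats.filter (· ⊆ F), f G =
      ∑ G₁ ∈ M₁.flats.filter (· ⊆ F ∩ M₁.E), ∑ G₂ ∈ M₂.flats.filter (· ⊆ F ∩ M₂.E),
        f (G₁ ∪ G₂) := by
  rw [sum_filter, sum_flats_dsum hd, sum_filter]
  refine sum_congr rfl fun G₁ hG₁ => ?_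
  rw [sum_filter]
  by_cases h : G₁ ⊆ F
  · rw [if_pos (subset_inter h (subset_of_mem_flats hG₁))]
    refine sum_congr rfl fun G₂ hG₂ => ?_
    simp only [union_subset_iff, subset_inter_iff, subset_of_mem_flats hG₂, h, true_and, and_true]
  · rw [if_neg fun h' => h (subset_inter_iff.mp h').1]
    exact sum_eq_zero fun G₂ _ => if_neg fun h' => h (union_subset_iff.mp h').1

theorem card_filter_subset_dsum (hd : Disjoint M₁.E M₂.E) (F : Finset α) :
    #((M₁.dsum M₂).flats.filter (· ⊆ F)) =
      #(M₁.flats.filter (· ⊆ F ∩ M₁.E)) * #(M₂.flats.filter (· ⊆ F ∩ M₂.E)) := by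
  simp only [card_eq_sum_ones, sum_flats_subset_dsum hd F, sum_mul_sum, mul_one]

theorem mu_dsum (hd : Disjoint M₁.E M₂.E) (hF : F ∈ (M₁.dsum M₂).flats) :
    (M₁.dsum M₂).mu F = M₁.mu (F ∩ M₁.E) * M₂.mu (F ∩ M₂.E) := by
  induction F using Finset.strongInduction with
  | H F ih =>
  obtain ⟨-, hF₁, hF₂⟩ := (mem_flats_dsum_iff hd).mp hF
  set ν : Finset α → ℤ := fun G => M₁.mu (G ∩ M₁.E) * M₂.mu (G ∩ M₂.E)
  have hμ := sum_mu_filter_subset hF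
  have hν : ∑ G ∈ (M₁.dsum M₂).flats.filter (· ⊆ F), ν G =
      if #((M₁.dsum M₂).flats.filter (· ⊆ F)) = 1 then 1 else 0 := by
    have hsplit : ∀ G₁ ∈ M₁.flats.filter (· ⊆ F ∩ M₁.E),
        ∀ G₂ ∈ M₂.flats.filter (· ⊆ F ∩ M₂.E), ν (G₁ ∪ G₂) = M₁.mu G₁ * M₂.mu G₂ :=
      fun G₁ hG₁ G₂ hG₂ => by
        have hs₁ := subset_of_mem_flats (mem_filter.mp hG₁).1
        have hs₂ := subset_of_mem_flats (mem_filter.mp hG₂).1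
        simp only [ν, union_inter_left_eq hd hs₁ hs₂, union_inter_right_eq hd hs₁ hs₂]
    rw [sum_flats_subset_dsum hd, sum_congr rfl fun G₁ hG₁ => sum_congr rfl (hsplit G₁ hG₁),
      ← sum_mul_sum, sum_mu_filter_subset hF₁, sum_mu_filter_subset hF₂,
      card_filter_subset_dsum hd]
    simp only [mul_eq_one, ite_zero_mul_ite_zero, mul_one]
  have hlt : ∑ G ∈ (M₁.dsum M₂).flats.filter (· ⊂ F), (M₁.dsum M₂).mu G =
      ∑ G ∈ (M₁.dsum M₂).flats.filter (· ⊂ F), ν G :=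
    sum_congr rfl fun G hG => ih G (mem_filter.mp hG).2 (mem_filter.mp hG).1
  have hF' : F ∉ (M₁.dsum M₂).flats.filter (· ⊂ F) := fun h => (mem_filter.mp h).2.ne rfl
  rw [filter_subset_eq_insert_filter_ssubset hF, sum_insert hF'] at hμ hν
  linarith

theorem charPoly_dsum (hd : Disjoint M₁.E M₂.E) (hm₁ : Monotone M₁.r) (hm₂ : Monotone M₂.r) :
    (M₁.dsum M₂).charPoly = M₁.charPoly * M₂.charPoly := by
  rw [charPoly, charPoly, charPoly, sum_flats_dsum hd, sum_mul_sum]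
  refine sum_congr rfl fun F₁ hF₁ => sum_congr rfl fun F₂ hF₂ => ?_
  have hs₁ := subset_of_mem_flats hF₁
  have hs₂ := subset_of_mem_flats hF₂
  have hr₁ : M₁.r F₁ ≤ M₁.rk := hm₁ hs₁
  have hr₂ : M₂.r F₂ ≤ M₂.rk := hm₂ hs₂
  rw [mu_dsum hd (union_mem_flats_dsum hd hF₁ hF₂), union_inter_left_eq hd hs₁ hs₂,
    union_inter_right_eq hd hs₁ hs₂, r_dsum_union hd hs₁ hs₂, rk_dsum,
    show M₁.rk + M₂.rk - (M₁.r F₁ + M₂.r F₂) = (M₁.rk - M₁.r F₁) + (M₂.rk - M₂.r F₂) by omega,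
    pow_add, C_mul]
  ring

theorem loc_dsum (hd : Disjoint M₁.E M₂.E) (h₁ : F₁ ⊆ M₁.E) (h₂ : F₂ ⊆ M₂.E) :
    (M₁.dsum M₂).loc (F₁ ∪ F₂) = (M₁.loc F₁).dsum (M₂.loc F₂) := by
  simp only [loc, dsum, mk.injEq, true_and]
  funext A
  rw [inter_assoc, union_inter_left_eq hd h₁ h₂, inter_assoc, union_inter_right_eq hd h₁ h₂,
    inter_assoc, inter_self, inter_assoc, inter_self]

theorem con_dsum (hd : Disjoint M₁.E M₂.E) (hm₁ : Monotone M₁.r) (hm₂ : Monotone M₂.r)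
    (h₁ : F₁ ⊆ M₁.E) (h₂ : F₂ ⊆ M₂.E) :
    (M₁.dsum M₂).con (F₁ ∪ F₂) = (M₁.con F₁).dsum (M₂.con F₂) := by
  have hE : (M₁.dsum M₂).E \ (F₁ ∪ F₂) = (M₁.E \ F₁) ∪ (M₂.E \ F₂) := by
    have := disjoint_left.mp hd
    ext x
    simp only [dsum_E, mem_sdiff, mem_union]
    have := @h₁ x
    have := @h₂ x
    tauto
  simp only [con, hE]
  refine congrArg (mk _) (funext fun A => ?_)
  change _ = (M₁.r (A ∩ (M₁.E \ F₁) ∩ (M₁.E \ F₁) ∪ F₁) - M₁.r F₁) +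
    (M₂.r (A ∩ (M₂.E \ F₂) ∩ (M₂.E \ F₂) ∪ F₂) - M₂.r F₂)
  have hX₁ : A ∩ (M₁.E \ F₁) ∪ F₁ ⊆ M₁.E := union_subset (inter_subset_right.trans sdiff_subset) h₁
  have hX₂ : A ∩ (M₂.E \ F₂) ∪ F₂ ⊆ M₂.E := union_subset (inter_subset_right.trans sdiff_subset) h₂
  have hU : A ∩ (M₁.E \ F₁ ∪ M₂.E \ F₂) ∪ (F₁ ∪ F₂) =
      (A ∩ (M₁.E \ F₁) ∪ F₁) ∪ (A ∩ (M₂.E \ F₂) ∪ F₂) := by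
    rw [inter_union_distrib_left, union_union_union_comm]
  have hr₁ : M₁.r F₁ ≤ M₁.r (A ∩ (M₁.E \ F₁) ∪ F₁) := hm₁ subset_union_right
  have hr₂ : M₂.r F₂ ≤ M₂.r (A ∩ (M₂.E \ F₂) ∪ F₂) := hm₂ subset_union_right
  rw [inter_assoc, inter_self, inter_assoc, inter_self, hU, r_dsum_union hd hX₁ hX₂,
    r_dsum_union hd h₁ h₂]
  omega

end PreMatroid

open PreMatroid

theorem KLfun.apply_congr (P : KLfun) {α : Type} [DecidableEq α] {M M' : PreMatroid α}
    (e : M = M') (hM : M.IsMatroid) (hM' : M'.IsMatroid) : P α M hM = P α M' hM' := by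
  subst e
  rfl

/-- The summand of the defining recursion, extended by `0` to `F ⊄ M.E` so that sums over
flats can be reindexed without `attach`. -/
noncomputable def klSummand (P : KLfun) {α : Type} [DecidableEq α] (M : PreMatroid α)
    (h : M.IsMatroid) (F : Finset α) : ℤ[X] :=
  if hF : F ⊆ M.E then (M.loc F).charPoly * P α (M.con F) (h.con hF) else 0

section

variable {α : Type} [DecidableEq α] {M M₁ M₂ : PreMatroid α} {F F₁ F₂ : Finset α}

theorem klSummand_of_subset (P : KLfun) (h : M.IsMatroid) (hF : F ⊆ M.E) :
    klSummand P M h F = (M.loc F).charPoly * P α (M.con F) (h.con hF) :=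
  dif_pos hF

theorem klSummand_dsum_sub_mul (P : KLfun) (hd : Disjoint M₁.E M₂.E) (h₁ : M₁.IsMatroid)
    (h₂ : M₂.IsMatroid) (h : (M₁.dsum M₂).IsMatroid) (hs₁ : F₁ ⊆ M₁.E) (hs₂ : F₂ ⊆ M₂.E)
    (hc : ((M₁.con F₁).dsum (M₂.con F₂)).IsMatroid) :
    klSummand P (M₁.dsum M₂) h (F₁ ∪ F₂) - klSummand P M₁ h₁ F₁ * klSummand P M₂ h₂ F₂ =
      (M₁.loc F₁).charPoly * (M₂.loc F₂).charPoly *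
        (P α ((M₁.con F₁).dsum (M₂.con F₂)) hc -
          P α (M₁.con F₁) (h₁.con hs₁) * P α (M₂.con F₂) (h₂.con hs₂)) := by
  have hd' : Disjoint F₁ F₂ := disjoint_of_subset_left hs₁ (disjoint_of_subset_right hs₂ hd)
  rw [klSummand_of_subset P h (union_subset_union hs₁ hs₂), klSummand_of_subset P h₁ hs₁,
    klSummand_of_subset P h₂ hs₂, loc_dsum hd hs₁ hs₂,
    charPoly_dsum hd' (monotone_loc_r h₁.monotone F₁) (monotone_loc_r h₂.monotone F₂),
    P.apply_congr (con_dsum hd h₁.monotone h₂.monotone hs₁ hs₂) _ hc]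
  ring

namespace KLconds

variable {P : KLfun}

theorem two_mul_natDegree_le (hP : KLconds P) (h : M.IsMatroid) :
    2 * (P α M h).natDegree ≤ M.rk := by
  rcases Nat.eq_zero_or_pos M.rk with h0 | hpos
  · simp [(hP α M h).1 h0]
  · exact ((hP α M h).2.1 hpos).le

theorem two_mul_natDegree_sub_mul_lt (hP : KLconds P) (h : M.IsMatroid) (h₁ : M₁.IsMatroid)
    (h₂ : M₂.IsMatroid) (hrk : M.rk = M₁.rk + M₂.rk) (hpos : 0 < M.rk) :
    2 * (P α M h - P α M₁ h₁ * P α M₂ h₂).natDegree < M.rk := by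
  have hsub := natDegree_sub_le (P α M h) (P α M₁ h₁ * P α M₂ h₂)
  have hmul := natDegree_mul_le (p := P α M₁ h₁) (q := P α M₂ h₂)
  have hM := (hP α M h).2.1 hpos
  have hle₁ := hP.two_mul_natDegree_le h₁
  have hle₂ := hP.two_mul_natDegree_le h₂
  have hlt₁ := (Nat.eq_zero_or_pos M₁.rk).imp_right (hP α M₁ h₁).2.1
  have hlt₂ := (Nat.eq_zero_or_pos M₂.rk).imp_right (hP α M₂ h₂).2.1
  omega

theorem reflect_eq_sum (hP : KLconds P) (h : M.IsMatroid) :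
    (P α M h).reflect M.rk = ∑ F ∈ M.flats, klSummand P M h F := by
  rw [(hP α M h).2.2, ← sum_attach M.flats]
  exact sum_congr rfl fun F _ => (klSummand_of_subset P h (subset_of_mem_flats F.2)).symm

theorem reflect_mul_eq_sum (hP : KLconds P) (h₁ : M₁.IsMatroid) (h₂ : M₂.IsMatroid) :
    (P α M₁ h₁ * P α M₂ h₂).reflect (M₁.rk + M₂.rk) =
      ∑ F₁ ∈ M₁.flats, ∑ F₂ ∈ M₂.flats, klSummand P M₁ h₁ F₁ * klSummand P M₂ h₂ F₂ := by
  have hle₁ := hP.two_mul_natDegree_le h₁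
  have hle₂ := hP.two_mul_natDegree_le h₂
  rw [reflect_mul _ _ (by omega) (by omega), hP.reflect_eq_sum, hP.reflect_eq_sum, sum_mul_sum]

theorem apply_dsum_of_forall_con (hP : KLconds P) (hd : Disjoint M₁.E M₂.E)
    (h₁ : M₁.IsMatroid) (h₂ : M₂.IsMatroid) (h : (M₁.dsum M₂).IsMatroid)
    (hcon : ∀ F₁ ∈ M₁.flats, ∀ F₂ ∈ M₂.flats, (F₁ ∪ F₂).Nonempty → ∀ hc hc₁ hc₂,
      P α ((M₁.con F₁).dsum (M₂.con F₂)) hc = P α (M₁.con F₁) hc₁ * P α (M₂.con F₂) hc₂) :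
    P α (M₁.dsum M₂) h = P α M₁ h₁ * P α M₂ h₂ := by
  rcases Nat.eq_zero_or_pos (M₁.dsum M₂).rk with h0 | hpos
  · have hrk : M₁.rk + M₂.rk = 0 := by rwa [rk_dsum] at h0
    rw [(hP α _ h).1 h0, (hP α M₁ h₁).1 (by omega), (hP α M₂ h₂).1 (by omega), mul_one]
  set D := P α (M₁.dsum M₂) h - P α M₁ h₁ * P α M₂ h₂
  -- At `(∅, ∅)` the localizations are trivial and the contractions are the matroids themselves.
  have hterm : ∀ F₁ ∈ M₁.flats, ∀ F₂ ∈ M₂.flats,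
      klSummand P (M₁.dsum M₂) h (F₁ ∪ F₂) - klSummand P M₁ h₁ F₁ * klSummand P M₂ h₂ F₂ =
        if F₁ = ∅ ∧ F₂ = ∅ then D else 0 := by
    intro F₁ hF₁ F₂ hF₂
    have hs₁ := subset_of_mem_flats hF₁
    have hs₂ := subset_of_mem_flats hF₂
    rw [klSummand_dsum_sub_mul P hd h₁ h₂ h hs₁ hs₂
      (con_dsum hd h₁.monotone h₂.monotone hs₁ hs₂ ▸ h.con (union_subset_union hs₁ hs₂))]
    split_ifs with hempty
    · obtain ⟨rfl, rfl⟩ := hempty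
      rw [charPoly_loc_empty, charPoly_loc_empty, one_mul, one_mul,
        P.apply_congr (by rw [con_empty h₁, con_empty h₂]) _ h, P.apply_congr (con_empty h₁) _ h₁,
        P.apply_congr (con_empty h₂) _ h₂]
    · rw [hcon F₁ hF₁ F₂ hF₂ (nonempty_iff_ne_empty.mpr (by rwa [Ne, union_eq_empty])) _
        (h₁.con hs₁) (h₂.con hs₂), sub_self, mul_zero]
  have hrefl : D.reflect (M₁.dsum M₂).rk = if ∅ ∈ M₁.flats ∧ ∅ ∈ M₂.flats then D else 0 := by
    rw [reflect_sub, hP.reflect_eq_sum h, rk_dsum, hP.reflect_mul_eq_sum h₁ h₂,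
      sum_flats_dsum hd, ← sum_sub_distrib]
    simp_rw [← sum_sub_distrib]
    rw [sum_congr rfl fun F₁ hF₁ => sum_congr rfl (hterm F₁ hF₁)]
    simp only [ite_and, sum_ite_irrel, sum_const_zero, sum_ite_eq']
  rw [← sub_eq_zero]
  split_ifs at hrefl
  · exact eq_zero_of_reflect_eq_self hrefl
      (hP.two_mul_natDegree_sub_mul_lt h h₁ h₂ rk_dsum hpos)
  · exact reflect_eq_zero_iff.mp hrefl

end KLconds

end

/-- If a matroid `M` is the direct sum of two matroids `M₁` and `M₂`
(on disjoint ground sets), then `P_M(t) = P_{M₁}(t) · P_{M₂}(t)`. -/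
theorem kl_direct_sum (P : KLfun) (hP : KLconds P)
    (α : Type) [DecidableEq α] (M₁ M₂ : PreMatroid α) (h₁ : M₁.IsMatroid) (h₂ : M₂.IsMatroid)
    (hdisj : Disjoint M₁.E M₂.E) (h : (M₁.dsum M₂).IsMatroid) :
    P α (M₁.dsum M₂) h = P α M₁ h₁ * P α M₂ h₂ := by
  induction hn : (M₁.dsum M₂).rk + (M₁.dsum M₂).E.card using Nat.strong_induction_on
    generalizing M₁ M₂ with
  | _ n ih =>
  refine hP.apply_dsum_of_forall_con hdisj h₁ h₂ h fun F₁ hF₁ F₂ hF₂ hne hc hc₁ hc₂ => ?_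
  have hs₁ := subset_of_mem_flats hF₁
  have hs₂ := subset_of_mem_flats hF₂
  have hdisj' : Disjoint (M₁.con F₁).E (M₂.con F₂).E :=
    disjoint_of_subset_left sdiff_subset (disjoint_of_subset_right sdiff_subset hdisj)
  refine ih _ ?_ _ _ hc₁ hc₂ hdisj' hc rfl
  rw [← hn, ← con_dsum hdisj h₁.monotone h₂.monotone hs₁ hs₂]
  exact rk_add_card_con_lt h.monotone (union_subset_union hs₁ hs₂) hne
end
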